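/- Let m ≥ 2, let 1 ≤ j ≤ m−1 and 1 ≤ l ≤ m−j, and let S = {e_j − e_k : j < k ≤ m} ∪ {e_j} ∪ {e_j + e_k : m−l+1 ≤ k ≤ m} ⊆ ℤ^m. Then the set R⁺ ∖ S is closed: for all α, β ∈ R⁺ ∖ S and all natural numbers a, b such that aα + bβ ∈ R, one has aα + bβ ∈ R⁺ ∖ S. -/

import Mathlib

/- STATEMENT 0: Closedness of R⁺ ∖ S in type B_m.
   We model ℤ^m as functions ℕ → ℤ with standard basis vectors
   `e i := Pi.single i 1` for `1 ≤ i ≤ m`. -/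

namespace Stmt0

/-- The `i`-th standard basis vector of ℤ^m (1-indexed). -/
noncomputable def e (i : ℕ) : ℕ → ℤ := Pi.single i 1

/-- The positive roots of the type `B_m` root system:
`R⁺ = {e_i − e_k : i < k} ∪ {e_i + e_k : i < k} ∪ {e_i : 1 ≤ i ≤ m}`. -/
noncomputable def Rpos (m : ℕ) : Set (ℕ → ℤ) :=
  {v | ∃ i k, 1 ≤ i ∧ i < k ∧ k ≤ m ∧ (v = e i - e k ∨ v = e i + e k)} ∪
  {v | ∃ i, 1 ≤ i ∧ i ≤ m ∧ v = e i}

/-- The full type `B_m` root system `R = {±e_i ± e_k : i < k} ∪ {±e_i}`. -/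
noncomputable def Rall (m : ℕ) : Set (ℕ → ℤ) :=
  Rpos m ∪ {v | ∃ w ∈ Rpos m, v = -w}

/-- The set `S = {e_j − e_k : j < k ≤ m} ∪ {e_j} ∪ {e_j + e_k : m−l+1 ≤ k ≤ m}`. -/
noncomputable def S (m j l : ℕ) : Set (ℕ → ℤ) :=
  {v | ∃ k, j < k ∧ k ≤ m ∧ v = e j - e k} ∪ {e j} ∪
  {v | ∃ k, m - l + 1 ≤ k ∧ k ≤ m ∧ v = e j + e k}

/-! Both halves of the claim are separation arguments: if a linear functional `f` is `≥ 0` on `A`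
and `< 0` on `B`, no combination `a • α + b • β` of elements of `A` lies in `B`. The height
`∑ (m + 1 - i) v_i` is positive on `R⁺`, so `aα + bβ ∈ R` cannot be a negative root. The functional
`∑_{i ≤ m - l} v_i - 2 v_j` is negative on `S`, whose elements are `e_j`, `e_j - e_k`, and
`e_j + e_k` with `k > m - l`. It is nonnegative on `R⁺ ∖ S` because `j ≤ m - l`: the
roots there with `v_j = 1`, namely `e_i + e_j` and `e_j + e_k` with `k ≤ m - l`, have both
nonzero coordinates in `{1, …, m - l}`. -/

open Finset

def weightedSum (s : Finset ℕ) (c : ℕ → ℤ) : (ℕ → ℤ) →+ ℤ where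
  toFun v := ∑ i ∈ s, c i * v i
  map_zero' := by simp
  map_add' v w := by simp [mul_add, sum_add_distrib]

lemma weightedSum_e (s : Finset ℕ) (c : ℕ → ℤ) (i : ℕ) :
    weightedSum s c (e i) = if i ∈ s then c i else 0 := by
  simp [weightedSum, e, Pi.single_apply]

theorem nsmul_add_nsmul_notMem_of_separated {M N : Type*} [AddCommMonoid M] [AddCommMonoid N]
    [PartialOrder N] [IsOrderedAddMonoid N] (f : M →+ N) {A B : Set M}
    (hA : ∀ v ∈ A, 0 ≤ f v) (hB : ∀ v ∈ B, f v < 0) {α β : M} (hα : α ∈ A) (hβ : β ∈ A)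
    (a b : ℕ) : a • α + b • β ∉ B := fun h => by
  have := hB _ h
  rw [map_add, map_nsmul, map_nsmul] at this
  exact (add_nonneg (nsmul_nonneg (hA α hα) a) (nsmul_nonneg (hA β hβ) b)).not_gt this

noncomputable def height (m : ℕ) : (ℕ → ℤ) →+ ℤ := weightedSum (Icc 1 m) fun i => m + 1 - i

noncomputable def separator (m j l : ℕ) : (ℕ → ℤ) →+ ℤ :=
  weightedSum (Icc 1 (m - l)) 1 - weightedSum {j} 2

lemma height_pos {m : ℕ} {v : ℕ → ℤ} (hv : v ∈ Rpos m) : 0 < height m v := by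
  rcases hv with ⟨i, k, hi, hik, hk, rfl | rfl⟩ | ⟨i, hi, him, rfl⟩ <;>
    simp only [height, map_sub, map_add, weightedSum_e, mem_Icc] <;> split_ifs <;> omega

lemma separator_neg {m j l : ℕ} {v : ℕ → ℤ} (hv : v ∈ S m j l) : separator m j l v < 0 := by
  rcases hv with (⟨k, hjk, hk, rfl⟩ | rfl) | ⟨k, hlk, hk, rfl⟩ <;>
    simp only [separator, AddMonoidHom.sub_apply, map_sub, map_add, weightedSum_e, mem_Icc,
      mem_singleton, Pi.ofNat_apply] <;> split_ifs <;> omega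

lemma separator_nonneg {m j l : ℕ} (hl : l ≤ m - j) {v : ℕ → ℤ} (hv : v ∈ Rpos m \ S m j l) :
    0 ≤ separator m j l v := by
  obtain ⟨⟨i, k, hi, hik, hk, rfl | rfl⟩ | ⟨i, hi, him, rfl⟩, hS⟩ := hv
  all_goals
    simp only [separator, AddMonoidHom.sub_apply, map_sub, map_add, weightedSum_e, mem_Icc,
      mem_singleton, Pi.ofNat_apply]
  · have : i ≠ j := by rintro rfl; exact hS (.inl (.inl ⟨k, hik, hk, rfl⟩))
    split_ifs <;> omega
  · have : ¬(i = j ∧ m - l + 1 ≤ k) := by rintro ⟨rfl, hlk⟩; exact hS (.inr ⟨k, hlk, hk, rfl⟩)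
    split_ifs <;> omega
  · have : i ≠ j := by rintro rfl; exact hS (.inl (.inr rfl))
    split_ifs <;> omega

theorem closedness_typeB (m j l : ℕ) (hl2 : l ≤ m - j)
    (α β : ℕ → ℤ) (hα : α ∈ Rpos m \ S m j l) (hβ : β ∈ Rpos m \ S m j l)
    (a b : ℕ) (hab : a • α + b • β ∈ Rall m) :
    a • α + b • β ∈ Rpos m \ S m j l := by
  have hpos : a • α + b • β ∈ Rpos m := by
    refine hab.resolve_right <| nsmul_add_nsmul_notMem_of_separated (height m)
      (fun v hv => (height_pos hv).le) ?_ hα.1 hβ.1 a b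
    rintro v ⟨w, hw, rfl⟩
    simpa using height_pos hw
  exact ⟨hpos, nsmul_add_nsmul_notMem_of_separated (separator m j l)
    (fun _ => separator_nonneg hl2) (fun _ => separator_neg) hα hβ a b⟩

end Stmt0
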